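/- arXiv:1506.06271 — 4 statements merged into one kernel-verified Lean document; each statement's English description precedes it below -/
import Mathlib

section
/- Let L ≥ 1 and let h, g ∈ ℂ^L. Let φ = arg⟪h, g⟫ and Γ = min(‖h‖², ‖g‖²). Fix υ ∈ ℝ and let (d₁, d₂) ∈ ℂ × ℂ with (d₁, d₂) ≠ (0, 0). Let d_min > 0 be any real number such that d_min ≤ |d₁| whenever d₁ ≠ 0 and d_min ≤ |d₂| whenever d₂ ≠ 0. Define C₃ = min(1, 2·(1 − |cos(arg d₂ − arg d₁ + υ)|)). Then the phase-rotated decision distance satisfies ‖d₁ • g + (exp(i(υ + φ))·d₂) • h‖ ≥ √(C₃ · Γ · d_min²). (Proposition 1: under PR preprocessing with u₁ = exp(i(υ+φ)), u₂ = 1, every decision distance is lower bounded by √(C₃ Γ d_min²).) -/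
/-!
Since the preprocessing phase `exp(iφ)` cancels the phase of `⟪g, h⟫ = conj ⟪h, g⟫`, expanding the
square gives `λ² = |d₁|²‖g‖² + |d₂|²‖h‖² + 2 |d₁| |d₂| |⟪h, g⟫| cos θ` with
`θ = arg d₂ - arg d₁ + υ`. If one symbol difference vanishes, a single term `≥ Γ d_min²` remains.
Otherwise AM-GM and Cauchy–Schwarz bound the sum below by
`2 (1 - |cos θ|) |d₁| |d₂| ‖g‖ ‖h‖ ≥ 2 (1 - |cos θ|) Γ d_min²`.
-/

open scoped ComplexConjugate InnerProductSpace

open RCLike in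
theorem norm_smul_add_smul_sq {𝕜 E : Type*} [RCLike 𝕜] [NormedAddCommGroup E]
    [InnerProductSpace 𝕜 E] (a b : 𝕜) (x y : E) :
    ‖a • x + b • y‖ ^ 2 =
      ‖a‖ ^ 2 * ‖x‖ ^ 2 + ‖b‖ ^ 2 * ‖y‖ ^ 2 + 2 * re (conj a * b * ⟪x, y⟫_𝕜) := by
  rw [@norm_add_sq 𝕜, inner_smul_left, inner_smul_right, norm_smul, norm_smul, mul_assoc]
  ring

open Complex in
theorem conj_eq_norm_mul_exp_neg_arg (z : ℂ) : conj z = ‖z‖ * exp (-(z.arg * I)) := by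
  conv_lhs => rw [← norm_mul_exp_arg_mul_I z]
  rw [map_mul, ← exp_conj, map_mul, conj_ofReal, conj_ofReal, conj_I, mul_neg]

open Complex in
theorem re_conj_mul_exp_arg_mul_mul_conj (d₁ d₂ w : ℂ) (υ : ℝ) :
    (conj d₁ * (exp (I * (υ + w.arg)) * d₂) * conj w).re =
      ‖d₁‖ * ‖d₂‖ * ‖w‖ * Real.cos (d₂.arg - d₁.arg + υ) := by
  have polar : conj d₁ * (exp (I * (υ + w.arg)) * d₂) * conj w =
      ((‖d₁‖ * ‖d₂‖ * ‖w‖ : ℝ) : ℂ) * exp ((d₂.arg - d₁.arg + υ : ℝ) * I) := by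
    rw [conj_eq_norm_mul_exp_neg_arg d₁, conj_eq_norm_mul_exp_neg_arg w]
    conv_lhs => rw [← norm_mul_exp_arg_mul_I d₂]
    rw [show ((d₂.arg - d₁.arg + υ : ℝ) : ℂ) * I =
        -(d₁.arg * I) + I * (υ + w.arg) + d₂.arg * I + -(w.arg * I) by push_cast; ring,
      exp_add, exp_add, exp_add]
    push_cast
    ring
  rw [polar, re_ofReal_mul, exp_ofReal_mul_I_re]

theorem min_sq_le_mul {p q : ℝ} (hp : 0 ≤ p) (hq : 0 ≤ q) : min (p ^ 2) (q ^ 2) ≤ p * q := by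
  rcases le_total p q with hpq | hqp
  · exact (min_le_left _ _).trans (by nlinarith)
  · exact (min_le_right _ _).trans (by nlinarith)

theorem two_mul_one_sub_abs_mul_le_sq_add_sq_add_cross {x y p q r c : ℝ}
    (hx : 0 ≤ x) (hy : 0 ≤ y) (hr : 0 ≤ r) (hrpq : r ≤ p * q) :
    2 * (1 - |c|) * (x * y * (p * q)) ≤ x ^ 2 * p ^ 2 + y ^ 2 * q ^ 2 + 2 * (x * y * r * c) := by
  have amgm : 2 * (x * y * (p * q)) ≤ x ^ 2 * p ^ 2 + y ^ 2 * q ^ 2 := by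
    nlinarith [sq_nonneg (x * p - y * q)]
  have cross : -(p * q * |c|) ≤ r * c := by
    nlinarith [neg_abs_le c, abs_nonneg c]
  nlinarith [mul_le_mul_of_nonneg_left cross (mul_nonneg hx hy)]

theorem min_one_mul_min_sq_mul_sq_le_sq_add_sq_add_cross {x y p q r c m : ℝ}
    (hx : 0 ≤ x) (hy : 0 ≤ y) (hp : 0 ≤ p) (hq : 0 ≤ q) (hm : 0 ≤ m) (hxy : x ≠ 0 ∨ y ≠ 0)
    (hmx : x ≠ 0 → m ≤ x) (hmy : y ≠ 0 → m ≤ y) (hr : 0 ≤ r) (hrpq : r ≤ p * q)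
    (hc : |c| ≤ 1) :
    min 1 (2 * (1 - |c|)) * min (p ^ 2) (q ^ 2) * m ^ 2 ≤
      x ^ 2 * p ^ 2 + y ^ 2 * q ^ 2 + 2 * (x * y * r * c) := by
  set Γ := min (p ^ 2) (q ^ 2)
  have hΓ : 0 ≤ Γ := by positivity
  rcases eq_or_ne x 0 with rfl | hx0
  · have hmy := pow_le_pow_left₀ hm (hmy (hxy.resolve_left (not_not.2 rfl))) 2
    calc _ ≤ 1 * Γ * m ^ 2 := by gcongr; exact min_le_left _ _
      _ ≤ q ^ 2 * y ^ 2 := by rw [one_mul]; gcongr; exact min_le_right _ _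
      _ = _ := by ring
  rcases eq_or_ne y 0 with rfl | hy0
  · have hmx := pow_le_pow_left₀ hm (hmx hx0) 2
    calc _ ≤ 1 * Γ * m ^ 2 := by gcongr; exact min_le_left _ _
      _ ≤ p ^ 2 * x ^ 2 := by rw [one_mul]; gcongr; exact min_le_left _ _
      _ = _ := by ring
  have hm2 : m ^ 2 ≤ x * y := by rw [sq]; exact mul_le_mul (hmx hx0) (hmy hy0) hm hx
  calc _ ≤ 2 * (1 - |c|) * (Γ * m ^ 2) := by
        rw [← mul_assoc]; gcongr; exact min_le_right _ _
    _ ≤ 2 * (1 - |c|) * (x * y * (p * q)) := by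
        have : 0 ≤ 1 - |c| := by linarith
        rw [mul_comm (x * y)]
        gcongr
        exact min_sq_le_mul hp hq
    _ ≤ _ := two_mul_one_sub_abs_mul_le_sq_add_sq_add_cross hx hy hr hrpq

open Complex in
theorem pr_preprocessing_decision_distance_lower_bound_general
    (L : ℕ) (h g : EuclideanSpace ℂ (Fin L))
    (φ : ℝ) (hφ : φ = Complex.arg (inner ℂ h g : ℂ))
    (Γ : ℝ) (hΓ : Γ = min (‖h‖ ^ 2) (‖g‖ ^ 2))
    (υ : ℝ) (d₁ d₂ : ℂ) (hd : (d₁, d₂) ≠ (0, 0))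
    (dmin : ℝ) (hdmin : 0 < dmin)
    (hdmin1 : d₁ ≠ 0 → dmin ≤ ‖d₁‖)
    (hdmin2 : d₂ ≠ 0 → dmin ≤ ‖d₂‖)
    (C₃ : ℝ)
    (hC₃ : C₃ = min 1 (2 * (1 - |Real.cos (d₂.arg - d₁.arg + υ)|))) :
    ‖d₁ • g + (Complex.exp (Complex.I * (υ + φ)) * d₂) • h‖ ≥
      Real.sqrt (C₃ * Γ * dmin ^ 2) := by
  have hexpansion : ‖d₁ • g + (exp (I * (υ + φ)) * d₂) • h‖ ^ 2 =
      ‖d₁‖ ^ 2 * ‖g‖ ^ 2 + ‖d₂‖ ^ 2 * ‖h‖ ^ 2 +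
        2 * (‖d₁‖ * ‖d₂‖ * ‖⟪h, g⟫_ℂ‖ * Real.cos (d₂.arg - d₁.arg + υ)) := by
    rw [norm_smul_add_smul_sq, ← inner_conj_symm g h, RCLike.re_to_complex, hφ,
      re_conj_mul_exp_arg_mul_mul_conj, norm_mul, ← ofReal_add, norm_exp_I_mul_ofReal, one_mul]
  rw [ge_iff_le, Real.sqrt_le_left (norm_nonneg _), hexpansion, hΓ, hC₃, min_comm (‖h‖ ^ 2)]
  refine min_one_mul_min_sq_mul_sq_le_sq_add_sq_add_cross (norm_nonneg _) (norm_nonneg _)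
    (norm_nonneg _) (norm_nonneg _) hdmin.le ?_ (hdmin1 ∘ norm_ne_zero_iff.mp)
    (hdmin2 ∘ norm_ne_zero_iff.mp) (norm_nonneg _) ?_ (Real.abs_cos_le_one _)
  · rw [norm_ne_zero_iff, norm_ne_zero_iff, ← not_and_or]
    exact fun hzero => hd (Prod.ext hzero.1 hzero.2)
  · rw [mul_comm]; exact norm_inner_le_norm h g

/-- Proposition 1: under PR preprocessing with `u₁ = exp(i(υ+φ))`, `u₂ = 1`,
every decision distance is lower bounded by `√(C₃ Γ d_min²)`. -/
theorem pr_preprocessing_decision_distance_lower_bound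
    (L : ℕ) (hL : 1 ≤ L) (h g : EuclideanSpace ℂ (Fin L))
    (φ : ℝ) (hφ : φ = Complex.arg (inner ℂ h g : ℂ))
    (Γ : ℝ) (hΓ : Γ = min (‖h‖ ^ 2) (‖g‖ ^ 2))
    (υ : ℝ) (d₁ d₂ : ℂ) (hd : (d₁, d₂) ≠ (0, 0))
    (dmin : ℝ) (hdmin : 0 < dmin)
    (hdmin1 : d₁ ≠ 0 → dmin ≤ ‖d₁‖)
    (hdmin2 : d₂ ≠ 0 → dmin ≤ ‖d₂‖)
    (C₃ : ℝ)
    (hC₃ : C₃ = min 1 (2 * (1 - |Real.cos (d₂.arg - d₁.arg + υ)|))) :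
    ‖d₁ • g + (Complex.exp (Complex.I * (υ + φ)) * d₂) • h‖ ≥
      Real.sqrt (C₃ * Γ * dmin ^ 2) :=
  pr_preprocessing_decision_distance_lower_bound_general L h g φ hφ Γ hΓ υ d₁ d₂ hd dmin hdmin
    hdmin1 hdmin2 C₃ hC₃
end

section
/- Let L ≥ 1 and let h, g ∈ ℂ^L with h ≠ 0 and with g not a scalar multiple of h. Perform Gram–Schmidt orthogonalization: q₁ = ‖h‖⁻¹ • h, r₁₂ = ⟪q₁, g⟫, v = g − r₁₂ • q₁, r₂₂ = ‖v‖ (which is positive), q₂ = r₂₂⁻¹ • v, and let φ = arg⟪h, g⟫. Define the PR beamforming vector w ∈ ℂ^L componentwise by w_l = (1/√2)·(exp(−iφ)·conj(q₁ l) + i·conj(q₂ l)). Then min( |Σ_l h_l·w_l|², |Σ_l g_l·w_l|² ) = (1/2)·min(‖h‖², ‖g‖²). (Proposition 2.) -/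
/-!
For every `x`, `xᵀw = (e^{-iφ} ⟪q₁, x⟫ + i ⟪q₂, x⟫) / √2`. Since `q₂ ⟂ h`, the gain of `h` is
`|e^{-iφ} ‖h‖|² / 2 = ‖h‖² / 2`. Since `⟪h, g⟫ = ‖h‖ r₁₂`, the angle `φ` is `arg r₁₂`, so
`e^{-iφ} r₁₂ = |r₁₂|`; as `⟪q₂, g⟫ = r₂₂` is real too, the two terms of `gᵀw` are in quadrature and
`|gᵀw|² = (|r₁₂|² + r₂₂²) / 2 = ‖g‖² / 2` by Pythagoras. Both gains are half the squared norms.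
-/

open scoped InnerProductSpace ComplexConjugate

section GramSchmidt

variable {𝕜 E : Type*} [RCLike 𝕜] [NormedAddCommGroup E] [InnerProductSpace 𝕜 E]

theorem inner_inv_norm_smul_self (x : E) : ⟪(‖x‖ : 𝕜)⁻¹ • x, x⟫_𝕜 = ‖x‖ := by
  rw [inner_smul_left, inner_self_eq_norm_sq_to_K, map_inv₀, RCLike.conj_ofReal, sq,
    ← mul_assoc, inv_mul_mul_self]

theorem inner_sub_inner_smul_eq_zero {u : E} (hu : ‖u‖ = 1) (g : E) :
    ⟪u, g - ⟪u, g⟫_𝕜 • u⟫_𝕜 = 0 := by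
  have huu : ⟪u, u⟫_𝕜 = 1 := by simp [inner_self_eq_norm_sq_to_K, hu]
  rw [inner_sub_right, inner_smul_right, huu, mul_one, sub_self]

theorem inner_sub_inner_smul_self_eq_zero {u : E} (hu : ‖u‖ = 1) (g : E) :
    ⟪g - ⟪u, g⟫_𝕜 • u, u⟫_𝕜 = 0 :=
  inner_eq_zero_symm.1 (inner_sub_inner_smul_eq_zero hu g)

theorem inner_inv_norm_smul_sub_inner_smul {u : E} (hu : ‖u‖ = 1) (g : E) :
    ⟪(‖g - ⟪u, g⟫_𝕜 • u‖ : 𝕜)⁻¹ • (g - ⟪u, g⟫_𝕜 • u), g⟫_𝕜 = ‖g - ⟪u, g⟫_𝕜 • u‖ := by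
  set v := g - ⟪u, g⟫_𝕜 • u
  have hvu : ⟪v, u⟫_𝕜 = 0 := inner_sub_inner_smul_self_eq_zero hu g
  rw [show g = v + ⟪u, g⟫_𝕜 • u from (sub_add_cancel g _).symm, inner_add_right,
    inner_inv_norm_smul_self, inner_smul_right, inner_smul_left, hvu, mul_zero, mul_zero, add_zero]

theorem norm_sq_eq_norm_inner_sq_add_norm_sub_sq {u : E} (hu : ‖u‖ = 1) (g : E) :
    ‖g‖ ^ 2 = ‖⟪u, g⟫_𝕜‖ ^ 2 + ‖g - ⟪u, g⟫_𝕜 • u‖ ^ 2 := by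
  have horth : ⟪⟪u, g⟫_𝕜 • u, g - ⟪u, g⟫_𝕜 • u⟫_𝕜 = 0 := by
    rw [inner_smul_left, inner_sub_inner_smul_eq_zero hu, mul_zero]
  conv_lhs => rw [← add_sub_cancel (⟪u, g⟫_𝕜 • u) g]
  rw [norm_add_sq (𝕜 := 𝕜), horth, map_zero, mul_zero, add_zero, norm_smul, hu, mul_one]

end GramSchmidt

theorem sum_mul_conj_combination {𝕜 ι : Type*} [RCLike 𝕜] [Fintype ι]
    (x p q : EuclideanSpace 𝕜 ι) (a b c : 𝕜) :
    ∑ l, x l * (c * (a * conj (p l) + b * conj (q l))) = c * (a * ⟪p, x⟫_𝕜 + b * ⟪q, x⟫_𝕜) := by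
  simp only [PiLp.inner_apply, RCLike.inner_apply, Finset.mul_sum, ← Finset.sum_add_distrib]
  exact Finset.sum_congr rfl fun l _ => by ring

namespace Complex

theorem exp_neg_I_mul_arg_mul_self (z : ℂ) : exp (-(I * arg z)) * z = ‖z‖ := by
  nth_rw 2 [← norm_mul_exp_arg_mul_I z]
  rw [mul_left_comm, ← exp_add, show -(I * arg z) + arg z * I = 0 by ring, exp_zero, mul_one]

theorem norm_inv_sqrt_two_mul_sq (z : ℂ) : ‖(Real.sqrt 2 : ℂ)⁻¹ * z‖ ^ 2 = ‖z‖ ^ 2 / 2 := by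
  rw [norm_mul, norm_inv, norm_real, Real.norm_of_nonneg (Real.sqrt_nonneg 2), mul_pow, inv_pow,
    Real.sq_sqrt zero_le_two, inv_mul_eq_div]

theorem norm_ofReal_add_I_mul_sq (a b : ℝ) : ‖(a : ℂ) + I * b‖ ^ 2 = a ^ 2 + b ^ 2 := by
  rw [Complex.sq_norm, mul_comm, normSq_add_mul_I]

end Complex

theorem pr_beamforming_minimum_gain_general
    (L : ℕ) (h g : EuclideanSpace ℂ (Fin L))
    (hh : h ≠ 0)
    (q₁ q₂ v w : EuclideanSpace ℂ (Fin L)) (r₁₂ : ℂ) (r₂₂ φ : ℝ)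
    (hq₁ : q₁ = (‖h‖ : ℂ)⁻¹ • h)
    (hr₁₂ : r₁₂ = (inner ℂ q₁ g : ℂ))
    (hv : v = g - r₁₂ • q₁)
    (hr₂₂ : r₂₂ = ‖v‖)
    (hq₂ : q₂ = (r₂₂ : ℂ)⁻¹ • v)
    (hφ : φ = Complex.arg (inner ℂ h g : ℂ))
    (hw : ∀ l, w l = (Real.sqrt 2 : ℂ)⁻¹ *
      (Complex.exp (-(Complex.I * φ)) * (starRingEnd ℂ) (q₁ l) +
        Complex.I * (starRingEnd ℂ) (q₂ l))) :
    min ((‖(∑ l, h l * w l)‖) ^ 2) ((‖(∑ l, g l * w l)‖) ^ 2) =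
      (1 / 2) * min (‖h‖ ^ 2) (‖g‖ ^ 2) := by
  have hsum (x : EuclideanSpace ℂ (Fin L)) : ∑ l, x l * w l = (Real.sqrt 2 : ℂ)⁻¹ *
      (Complex.exp (-(Complex.I * φ)) * ⟪q₁, x⟫_ℂ + Complex.I * ⟪q₂, x⟫_ℂ) := by
    simp_rw [hw]
    exact sum_mul_conj_combination ..
  have hq₁_unit : ‖q₁‖ = 1 := hq₁ ▸ norm_smul_inv_norm hh
  have hh_eq : h = (‖h‖ : ℂ) • q₁ := by
    rw [hq₁, smul_smul, mul_inv_cancel₀ (by simpa using hh), one_smul]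
  have hq₁h : ⟪q₁, h⟫_ℂ = ‖h‖ := hq₁ ▸ inner_inv_norm_smul_self h
  have hq₂h : ⟪q₂, h⟫_ℂ = 0 := by
    rw [hq₂, hv, hr₁₂, hh_eq, inner_smul_left, inner_smul_right,
      inner_sub_inner_smul_self_eq_zero hq₁_unit, mul_zero, mul_zero]
  have hq₂g : ⟪q₂, g⟫_ℂ = r₂₂ := by
    rw [hq₂, hr₂₂, hv, hr₁₂]
    exact inner_inv_norm_smul_sub_inner_smul hq₁_unit g
  have hg_sq : ‖g‖ ^ 2 = ‖r₁₂‖ ^ 2 + r₂₂ ^ 2 := by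
    rw [hr₂₂, hv, hr₁₂]
    exact norm_sq_eq_norm_inner_sq_add_norm_sub_sq hq₁_unit g
  have hφ_eq : φ = Complex.arg r₁₂ := by
    rw [hφ, hr₁₂, hh_eq, inner_smul_left, Complex.conj_ofReal,
      Complex.arg_real_mul _ (norm_pos_iff.2 hh)]
  have hgain_h : ‖∑ l, h l * w l‖ ^ 2 = ‖h‖ ^ 2 / 2 := by
    rw [hsum, Complex.norm_inv_sqrt_two_mul_sq, hq₁h, hq₂h, mul_zero, add_zero, norm_mul,
      Complex.norm_exp]
    simp
  have hgain_g : ‖∑ l, g l * w l‖ ^ 2 = ‖g‖ ^ 2 / 2 := by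
    rw [hsum, Complex.norm_inv_sqrt_two_mul_sq, ← hr₁₂, hq₂g, hφ_eq,
      Complex.exp_neg_I_mul_arg_mul_self, Complex.norm_ofReal_add_I_mul_sq, hg_sq]
  rw [hgain_h, hgain_g, min_div_div_right zero_le_two]
  ring

/-- Proposition 2: with the PR beamforming vector `w`,
`min(|h^T w|², |g^T w|²) = (1/2)·min(‖h‖², ‖g‖²)`. -/
theorem pr_beamforming_minimum_gain
    (L : ℕ) (hL : 1 ≤ L) (h g : EuclideanSpace ℂ (Fin L))
    (hh : h ≠ 0) (hg : ∀ c : ℂ, g ≠ c • h)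
    (q₁ q₂ v w : EuclideanSpace ℂ (Fin L)) (r₁₂ : ℂ) (r₂₂ φ : ℝ)
    (hq₁ : q₁ = (‖h‖ : ℂ)⁻¹ • h)
    (hr₁₂ : r₁₂ = (inner ℂ q₁ g : ℂ))
    (hv : v = g - r₁₂ • q₁)
    (hr₂₂ : r₂₂ = ‖v‖)
    (hr₂₂pos : 0 < r₂₂)
    (hq₂ : q₂ = (r₂₂ : ℂ)⁻¹ • v)
    (hφ : φ = Complex.arg (inner ℂ h g : ℂ))
    (hw : ∀ l, w l = (Real.sqrt 2 : ℂ)⁻¹ *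
      (Complex.exp (-(Complex.I * φ)) * (starRingEnd ℂ) (q₁ l) +
        Complex.I * (starRingEnd ℂ) (q₂ l))) :
    min ((‖(∑ l, h l * w l)‖) ^ 2) ((‖(∑ l, g l * w l)‖) ^ 2) =
      (1 / 2) * min (‖h‖ ^ 2) (‖g‖ ^ 2) :=
  pr_beamforming_minimum_gain_general L h g hh q₁ q₂ v w r₁₂ r₂₂ φ hq₁ hr₁₂ hv hr₂₂ hq₂ hφ hw
end

section
/- Let d₁, d₂ be nonzero real numbers, regarded as complex numbers. Then cos(arg d₂ − arg d₁ + π/2) = 0, and consequently for every υ ∈ ℝ one has 2·(1 − |cos(arg d₂ − arg d₁ + υ)|) ≤ 2 = 2·(1 − |cos(arg d₂ − arg d₁ + π/2)|). Hence the rotation angle υ = π/2 maximizes the factor ρ(υ, d₁, d₂) = 2·(1 − |cos(arg d₂ − arg d₁ + υ)|) for all real symbol differences, as arises with MPAM modulation. (Optimality part of Proposition 5.) -/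
/-- Optimality part of Proposition 5: for nonzero real symbol differences,
`υ = π/2` maximizes `ρ(υ, d₁, d₂) = 2(1 − |cos(arg d₂ − arg d₁ + υ)|)`. -/
theorem pam_rotation_angle_optimal
    (d₁ d₂ : ℝ) (hd₁ : d₁ ≠ 0) (hd₂ : d₂ ≠ 0) :
    Real.cos (Complex.arg (d₂ : ℂ) - Complex.arg (d₁ : ℂ) + Real.pi / 2) = 0 ∧
      ∀ υ : ℝ,
        2 * (1 - |Real.cos (Complex.arg (d₂ : ℂ) - Complex.arg (d₁ : ℂ) + υ)|) ≤
          2 * (1 - |Real.cos (Complex.arg (d₂ : ℂ) - Complex.arg (d₁ : ℂ) + Real.pi / 2)|) := by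
  have harg : ∀ d : ℝ, d ≠ 0 → Complex.arg (d : ℂ) = 0 ∨ Complex.arg (d : ℂ) = Real.pi := by
    intro d hd
    rcases lt_or_gt_of_ne hd with h | h
    · exact Or.inr (Complex.arg_ofReal_of_neg h)
    · exact Or.inl (Complex.arg_ofReal_of_nonneg h.le)
  have hcos : Real.cos (Complex.arg (d₂ : ℂ) - Complex.arg (d₁ : ℂ) + Real.pi / 2) = 0 := by
    rcases harg d₁ hd₁ with h1 | h1 <;> rcases harg d₂ hd₂ with h2 | h2 <;>
      rw [h1, h2, Real.cos_eq_zero_iff]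
    · exact ⟨0, by ring⟩
    · exact ⟨1, by ring⟩
    · exact ⟨-1, by ring⟩
    · exact ⟨0, by ring⟩
  refine ⟨hcos, fun υ => ?_⟩
  rw [hcos]
  have := abs_nonneg (Real.cos (Complex.arg (d₂ : ℂ) - Complex.arg (d₁ : ℂ) + υ))
  simp only [abs_zero]
  linarith
end

section
/- Let L ≥ 1, let h, g ∈ ℂ^L, let φ = arg⟪h, g⟫, let υ ∈ ℝ, and let d₁, d₂ ∈ ℂ be nonzero. Then, with the PR preprocessing u₁ = exp(i(υ + φ)) and u₂ = 1, ‖d₁ • g + (exp(i(υ + φ))·d₂) • h‖² ≥ min(‖h‖², ‖g‖²)·(min(|d₁|, |d₂|))²·2·(1 − |cos(arg d₂ − arg d₁ + υ)|). (Inequality (24) in Appendix A: after pre-canceling the effective angle φ, the decision-distance lower bound depends only on υ and the symbol differences.) -/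
/-!
Expanding the square, `‖d₁ • g + u d₂ • h‖² = |d₁|²‖g‖² + |d₂|²‖h‖² + 2 Re⟪d₁ • g, u d₂ • h⟫`.
The factor `u = exp(i(υ + φ))` turns `exp(iφ) ⟪g, h⟫` into the real number `|⟪h, g⟫|`, so the
cross term is `|⟪h, g⟫| |d₁| |d₂| cos θ` with `θ = arg d₂ - arg d₁ + υ`, which Cauchy–Schwarz
bounds below by `-x y |cos θ|` for `x = |d₁| ‖g‖`, `y = |d₂| ‖h‖`. Finally
`x² + y² - 2 x y c = (1 - c)(x² + y²) + c (x - y)² ≥ 2 (1 - c) m²` whenever `m ≤ x, y` and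
`0 ≤ c ≤ 1`, applied with `m = min(‖h‖, ‖g‖) · min(|d₁|, |d₂|)`.
-/

open ComplexConjugate

namespace Complex

theorem exp_arg_mul_I_mul_conj (z : ℂ) : exp (arg z * I) * conj z = ‖z‖ := by
  nth_rewrite 2 [← norm_mul_exp_arg_mul_I z]
  rw [map_mul, conj_ofReal, ← exp_conj, map_mul, conj_ofReal, conj_I, mul_left_comm,
    ← exp_add]
  simp

theorem conj_mul_mul_exp_ofReal_mul_I (a b : ℂ) (υ : ℝ) :
    conj a * b * exp (υ * I) = (‖a‖ * ‖b‖ : ℝ) * exp ((arg b - arg a + υ : ℝ) * I) := by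
  nth_rewrite 1 [← norm_mul_exp_arg_mul_I a, ← norm_mul_exp_arg_mul_I b]
  rw [map_mul, conj_ofReal, ← exp_conj, map_mul, conj_ofReal, conj_I]
  push_cast
  rw [show ((b.arg - a.arg + υ : ℂ)) * I = -(a.arg * I) + b.arg * I + υ * I by ring,
    exp_add, exp_add]
  ring_nf

end Complex

theorem re_inner_smul_smul_exp_arg_inner {E : Type*} [SeminormedAddCommGroup E]
    [InnerProductSpace ℂ E] (x y : E) (a b : ℂ) (υ : ℝ) :
    RCLike.re (inner ℂ (a • x) ((Complex.exp (Complex.I * (υ + (inner ℂ y x).arg)) * b) • y)) =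
      ‖inner ℂ y x‖ * ‖a‖ * ‖b‖ * Real.cos (b.arg - a.arg + υ) := by
  have hinner : inner ℂ (a • x) ((Complex.exp (Complex.I * (υ + (inner ℂ y x).arg)) * b) • y) =
      (conj a * b * Complex.exp (υ * Complex.I)) *
        (Complex.exp ((inner ℂ y x).arg * Complex.I) * conj (inner ℂ y x)) := by
    rw [inner_smul_left, inner_smul_right, ← inner_conj_symm x y, mul_add, Complex.exp_add]
    ring_nf
  rw [hinner, Complex.exp_arg_mul_I_mul_conj, Complex.conj_mul_mul_exp_ofReal_mul_I,
    RCLike.re_to_complex, mul_comm, Complex.re_ofReal_mul, Complex.re_ofReal_mul, Complex.exp_ofReal_mul_I_re]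
  ring

theorem sq_mul_two_mul_one_sub_le {x y m c t : ℝ} (hm : 0 ≤ m) (hx : m ≤ x) (hy : m ≤ y)
    (hc₀ : 0 ≤ c) (hc₁ : c ≤ 1) (ht : -(x * y * c) ≤ t) :
    m ^ 2 * (2 * (1 - c)) ≤ x ^ 2 + y ^ 2 + 2 * t := by
  have hxm : 0 ≤ (1 - c) * (x ^ 2 - m ^ 2) := mul_nonneg (by linarith) (by nlinarith)
  have hym : 0 ≤ (1 - c) * (y ^ 2 - m ^ 2) := mul_nonneg (by linarith) (by nlinarith)
  nlinarith [mul_nonneg hc₀ (sq_nonneg (x - y))]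

theorem decision_distance_pr_lower_bound_general
    (L : ℕ) (h g : EuclideanSpace ℂ (Fin L))
    (φ : ℝ) (hφ : φ = Complex.arg (inner ℂ h g : ℂ))
    (υ : ℝ) (d₁ d₂ : ℂ) :
    ‖d₁ • g + (Complex.exp (Complex.I * (υ + φ)) * d₂) • h‖ ^ 2 ≥
      min (‖h‖ ^ 2) (‖g‖ ^ 2) * (min ‖d₁‖ ‖d₂‖) ^ 2 *
        (2 * (1 - |Real.cos (d₂.arg - d₁.arg + υ)|)) := by
  set θ := d₂.arg - d₁.arg + υ
  have hexpand : ‖d₁ • g + (Complex.exp (Complex.I * (υ + φ)) * d₂) • h‖ ^ 2 =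
      (‖d₁‖ * ‖g‖) ^ 2 + (‖d₂‖ * ‖h‖) ^ 2 +
        2 * (‖(inner ℂ h g : ℂ)‖ * ‖d₁‖ * ‖d₂‖ * Real.cos θ) := by
    rw [norm_add_sq (𝕜 := ℂ), hφ, re_inner_smul_smul_exp_arg_inner, norm_smul, norm_smul,
      norm_mul, ← Complex.ofReal_add, Complex.norm_exp_I_mul_ofReal]
    ring
  have hcross : -(‖d₁‖ * ‖g‖ * (‖d₂‖ * ‖h‖) * |Real.cos θ|) ≤
      ‖(inner ℂ h g : ℂ)‖ * ‖d₁‖ * ‖d₂‖ * Real.cos θ := by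
    refine le_trans ?_ (neg_abs_le _)
    rw [neg_le_neg_iff, abs_mul, abs_mul, abs_mul, abs_norm, abs_norm, abs_norm]
    have hcs := norm_inner_le_norm (𝕜 := ℂ) h g
    have hnonneg : 0 ≤ ‖d₁‖ * ‖d₂‖ * |Real.cos θ| := by positivity
    linarith [mul_le_mul_of_nonneg_right hcs hnonneg]
  have hmin : min (‖h‖ ^ 2) (‖g‖ ^ 2) * (min ‖d₁‖ ‖d₂‖) ^ 2 =
      (min ‖d₁‖ ‖d₂‖ * min ‖h‖ ‖g‖) ^ 2 := by
    rw [← pow_left_monotoneOn.map_min (norm_nonneg h) (norm_nonneg g)]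
    ring
  rw [ge_iff_le, hexpand, hmin]
  exact sq_mul_two_mul_one_sub_le (by positivity)
    (mul_le_mul (min_le_left _ _) (min_le_right _ _) (by positivity) (norm_nonneg _))
    (mul_le_mul (min_le_right _ _) (min_le_left _ _) (by positivity) (norm_nonneg _))
    (abs_nonneg _) (Real.abs_cos_le_one θ) hcross

/-- Inequality (24) in Appendix A: after pre-canceling the effective angle `φ` via
`u₁ = exp(i(υ + φ))`, `u₂ = 1`, the decision-distance lower bound depends only on
`υ` and the symbol differences. -/
theorem decision_distance_pr_lower_bound
    (L : ℕ) (hL : 1 ≤ L) (h g : EuclideanSpace ℂ (Fin L))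
    (φ : ℝ) (hφ : φ = Complex.arg (inner ℂ h g : ℂ))
    (υ : ℝ) (d₁ d₂ : ℂ) (hd₁ : d₁ ≠ 0) (hd₂ : d₂ ≠ 0) :
    ‖d₁ • g + (Complex.exp (Complex.I * (υ + φ)) * d₂) • h‖ ^ 2 ≥
      min (‖h‖ ^ 2) (‖g‖ ^ 2) * (min ‖d₁‖ ‖d₂‖) ^ 2 *
        (2 * (1 - |Real.cos (d₂.arg - d₁.arg + υ)|)) :=
  decision_distance_pr_lower_bound_general L h g φ hφ υ d₁ d₂
end
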